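/- arXiv:2002.10002 — 2 statements merged into one kernel-verified Lean document; each statement's English description precedes it below -/
import Mathlib

section
/- Let μ be any probability measure on ℝ^d, let μ* be an m̂-strongly log-concave probability measure with mode θ_U* (the minimizer of its negative log-density), and let p be a positive even integer. Then E_{θ∼μ}[‖θ − θ_U*‖^p] ≤ 2^{p−1}·W_p^p(μ, μ*) + (10^p/2)·(dp/m̂)^{p/2}. -/
/-!
Pick any coupling `γ` of `μ` and `μ*`. Since `‖θ - θ*‖ ≤ ‖θ - θ'‖ + ‖θ' - θ*‖` and
`(a + b)^p ≤ 2^{p-1} (a^p + b^p)`, integrating against `γ` and minimising over `γ` gives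
`E_μ ‖θ - θ*‖^p ≤ 2^{p-1} (W_p^p(μ, μ*) + E_{μ*} ‖θ - θ*‖^p)`.

For the moment of `μ* ∝ e^{-U}` (`p = 2k`), strong convexity of `U` on the segment from the mode
`θ*` to `θ* + y` gives `U(θ* + s y) + c ‖y‖² ≤ U(θ* + y)` with `c = m̂ s (1 - s) / 2`, so
`∫ e^{c‖y‖²} e^{-U(θ* + y)} dy ≤ s^{-d} ∫ e^{-U}` after substituting `y ↦ s y`. Together with
`u^k ≤ k^k e^{u - k}` at `u = c‖y‖²` this bounds `E_{μ*} ‖θ - θ*‖^{2k}` by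
`(k/c)^k e^{-k} s^{-d}`; for `s = (d + k)/(d + 2k)` one has `s^{-(d+k)} ≤ e^k`, and the bound
becomes `(2(d + 2k)/m̂)^k`, comfortably below the stated constant.
-/

open MeasureTheory Module
open scoped ENNReal

/-- `Wpp d p μ ν` is the `p`-th power of the Wasserstein-`p` distance between two measures
on `ℝ^d`: the infimum over couplings `γ` of `μ` and `ν` of `∫ ‖x − y‖^p dγ(x,y)`. -/
noncomputable def Wpp (d : ℕ) (p : ℝ)
    (μ ν : Measure (EuclideanSpace ℝ (Fin d))) : ℝ≥0∞ :=
  ⨅ (γ : Measure (EuclideanSpace ℝ (Fin d) × EuclideanSpace ℝ (Fin d)))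
    (_ : γ.map Prod.fst = μ) (_ : γ.map Prod.snd = ν),
      ∫⁻ z, (‖z.1 - z.2‖₊ : ℝ≥0∞) ^ p ∂γ

theorem pow_le_pow_mul_exp_sub {k : ℕ} (hk : 0 < k) {u : ℝ} (hu : 0 ≤ u) :
    u ^ k ≤ (k : ℝ) ^ k * Real.exp (u - k) := by
  have hk' : (0 : ℝ) < k := by exact_mod_cast hk
  have hexp : Real.exp (u / k - 1) ^ k = Real.exp (u - k) := by
    rw [← Real.exp_nat_mul]
    field_simp
  calc u ^ k = (k : ℝ) ^ k * (u / k) ^ k := by rw [← mul_pow, mul_div_cancel₀ _ hk'.ne']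
    _ ≤ (k : ℝ) ^ k * Real.exp (u / k - 1) ^ k := by
      gcongr
      linarith [Real.add_one_le_exp (u / k - 1)]
    _ = (k : ℝ) ^ k * Real.exp (u - k) := by rw [hexp]

theorem pow_two_mul_le_mul_exp_sq {k : ℕ} (hk : 0 < k) {c : ℝ} (hc : 0 < c) (r : ℝ) :
    r ^ (2 * k) ≤ (k / c) ^ k * Real.exp (c * r ^ 2 - k) := by
  have h := pow_le_pow_mul_exp_sub hk (by positivity : 0 ≤ c * r ^ 2)
  rw [mul_pow, ← pow_mul] at h
  rw [div_pow, div_mul_eq_mul_div, le_div_iff₀ (by positivity)]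
  linarith

theorem inv_div_pow_le_exp (d k : ℕ) (hk : 0 < k) :
    (((d + k : ℝ) / (d + 2 * k))⁻¹) ^ (d + k) ≤ Real.exp k := by
  have hdk : (0 : ℝ) < d + k := by positivity
  calc (((d + k : ℝ) / (d + 2 * k))⁻¹) ^ (d + k) = (1 + k / (d + k)) ^ (d + k) := by
        congr 1; field_simp; ring
    _ ≤ Real.exp (k / (d + k)) ^ (d + k) := by
        gcongr; linarith [Real.add_one_le_exp (k / (d + k : ℝ))]
    _ = Real.exp k := by
        rw [← Real.exp_nat_mul]; push_cast; field_simp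

theorem mode_moment_constant_le (d k : ℕ) (hk : 0 < k) {m : ℝ} (hm : 0 < m) {s : ℝ}
    (hs : s = (d + k) / (d + 2 * k)) :
    (k / (m / 2 * s * (1 - s))) ^ k * Real.exp (-k) * (s ^ d)⁻¹ ≤ (2 * (d + 2 * k) / m) ^ k := by
  have hk' : (0 : ℝ) < k := by exact_mod_cast hk
  have h1s : 1 - s = k / (d + 2 * k) := by rw [hs]; field_simp; ring
  have hbase : k / (m / 2 * s * (1 - s)) = 2 * (d + 2 * k) / m * s⁻¹ := by
    rw [h1s]; field_simp
  have hexp : s⁻¹ ^ (d + k) * Real.exp (-k) ≤ 1 := by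
    rw [Real.exp_neg, ← div_eq_mul_inv, div_le_one (Real.exp_pos _)]
    rw [hs]; exact inv_div_pow_le_exp d k hk
  calc (k / (m / 2 * s * (1 - s))) ^ k * Real.exp (-k) * (s ^ d)⁻¹
      = (2 * (d + 2 * k) / m) ^ k * (s⁻¹ ^ (d + k) * Real.exp (-k)) := by
        rw [hbase, mul_pow, pow_add, inv_pow]; ring
    _ ≤ (2 * (d + 2 * k) / m) ^ k := mul_le_of_le_one_right (by positivity) hexp

theorem two_pow_mul_moment_bound_le {d k : ℕ} (hd : 0 < d) (hk : 0 < k) {m : ℝ} (hm : 0 < m) :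
    2 ^ (2 * k - 1) * (2 * (d + 2 * k) / m) ^ k ≤ 10 ^ (2 * k) / 2 * (d * (2 * k) / m) ^ k := by
  have hd' : (1 : ℝ) ≤ d := by exact_mod_cast hd
  have hk' : (1 : ℝ) ≤ k := by exact_mod_cast hk
  have h2 : (2 : ℝ) ^ (2 * k - 1) = 4 ^ k / 2 := by
    rw [eq_div_iff two_ne_zero, ← pow_succ, Nat.sub_add_cancel (by omega), pow_mul]; norm_num
  have hbase : 4 * (2 * (d + 2 * k) / m) ≤ 100 * (d * (2 * k) / m) := by
    rw [mul_div_assoc', mul_div_assoc']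
    refine div_le_div_of_nonneg_right ?_ hm.le
    nlinarith [mul_le_mul hd' hk' zero_le_one (by linarith)]
  calc 2 ^ (2 * k - 1) * (2 * (d + 2 * k) / m) ^ k = (4 * (2 * (d + 2 * k) / m)) ^ k / 2 := by
        rw [h2, mul_pow]; ring
    _ ≤ (100 * (d * (2 * k) / m)) ^ k / 2 := by gcongr
    _ = 10 ^ (2 * k) / 2 * (d * (2 * k) / m) ^ k := by rw [mul_pow, pow_mul]; ring

section StrongConvexity

variable {E : Type*} [NormedAddCommGroup E] [NormedSpace ℝ E] {m : ℝ} {U : E → ℝ} {x₀ : E}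

theorem StrongConvexOn.apply_add_smul_add_le (hU : StrongConvexOn Set.univ m U) {y : E}
    (hmin : U x₀ ≤ U (x₀ + y)) {s : ℝ} (hs0 : 0 ≤ s) (hs1 : s ≤ 1) :
    U (x₀ + s • y) + m / 2 * s * (1 - s) * ‖y‖ ^ 2 ≤ U (x₀ + y) := by
  have h := hU.2 (Set.mem_univ (x₀ + y)) (Set.mem_univ x₀) hs0 (sub_nonneg.2 hs1)
    (add_sub_cancel s 1)
  rw [show s • (x₀ + y) + (1 - s) • x₀ = x₀ + s • y by module, add_sub_cancel_left,
    smul_eq_mul, smul_eq_mul] at h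
  nlinarith [mul_le_mul_of_nonneg_left hmin (sub_nonneg.2 hs1)]

theorem StrongConvexOn.continuous [FiniteDimensional ℝ E] (hU : StrongConvexOn Set.univ m U)
    (hm : 0 ≤ m) : Continuous U :=
  continuousOn_univ.1 <| (hU.convexOn fun r => by positivity).continuousOn isOpen_univ

end StrongConvexity

section AddHaar

variable {E : Type*} [NormedAddCommGroup E] [NormedSpace ℝ E] [FiniteDimensional ℝ E]
  [MeasurableSpace E] [BorelSpace E] (μ : Measure E) [μ.IsAddHaarMeasure]

theorem lintegral_comp_smul (g : E → ℝ≥0∞) {s : ℝ} (hs : s ≠ 0) :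
    ∫⁻ y, g (s • y) ∂μ = ENNReal.ofReal |(s ^ finrank ℝ E)⁻¹| * ∫⁻ y, g y ∂μ := by
  rw [← smul_eq_mul, ← lintegral_smul_measure, ← Measure.map_addHaar_smul μ hs]
  exact (lintegral_map_equiv g (MeasurableEquiv.smul₀ s hs)).symm

variable {m : ℝ} {U : E → ℝ} {x₀ : E}

theorem lintegral_exp_sq_sub_le (hU : StrongConvexOn Set.univ m U) (hmin : ∀ x, U x₀ ≤ U x)
    {s : ℝ} (hs0 : 0 < s) (hs1 : s ≤ 1) :
    ∫⁻ y, ENNReal.ofReal (Real.exp (m / 2 * s * (1 - s) * ‖y‖ ^ 2 - U (x₀ + y))) ∂μ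
      ≤ ENNReal.ofReal (s ^ finrank ℝ E)⁻¹ * ∫⁻ x, ENNReal.ofReal (Real.exp (-U x)) ∂μ := by
  calc ∫⁻ y, ENNReal.ofReal (Real.exp (m / 2 * s * (1 - s) * ‖y‖ ^ 2 - U (x₀ + y))) ∂μ
      ≤ ∫⁻ y, ENNReal.ofReal (Real.exp (-U (x₀ + s • y))) ∂μ := by
        refine lintegral_mono fun y => ENNReal.ofReal_le_ofReal (Real.exp_le_exp.2 ?_)
        linarith [hU.apply_add_smul_add_le (hmin (x₀ + y)) hs0.le hs1]
    _ = ENNReal.ofReal (s ^ finrank ℝ E)⁻¹ * ∫⁻ x, ENNReal.ofReal (Real.exp (-U x)) ∂μ := by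
        rw [lintegral_comp_smul μ (fun z => ENNReal.ofReal (Real.exp (-U (x₀ + z)))) hs0.ne',
          lintegral_add_left_eq_self (fun x => ENNReal.ofReal (Real.exp (-U x))),
          abs_of_pos (by positivity)]

theorem lintegral_enorm_sub_pow_mul_exp_neg_le_of_mem_Ioo (hm : 0 < m)
    (hU : StrongConvexOn Set.univ m U) (hmin : ∀ x, U x₀ ≤ U x) {k : ℕ} (hk : 0 < k) {s : ℝ}
    (hs0 : 0 < s) (hs1 : s < 1) :
    ∫⁻ x, ‖x - x₀‖ₑ ^ (2 * k) * ENNReal.ofReal (Real.exp (-U x)) ∂μ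
      ≤ ENNReal.ofReal ((k / (m / 2 * s * (1 - s))) ^ k * Real.exp (-k) * (s ^ finrank ℝ E)⁻¹)
        * ∫⁻ x, ENNReal.ofReal (Real.exp (-U x)) ∂μ := by
  set c := m / 2 * s * (1 - s)
  have hc : 0 < c := by have := sub_pos.2 hs1; positivity
  have hpoint (y : E) : ‖y‖ₑ ^ (2 * k) * ENNReal.ofReal (Real.exp (-U (x₀ + y)))
      ≤ ENNReal.ofReal ((k / c) ^ k * Real.exp (-k))
        * ENNReal.ofReal (Real.exp (c * ‖y‖ ^ 2 - U (x₀ + y))) := by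
    rw [← ofReal_norm, ← ENNReal.ofReal_pow (norm_nonneg y),
      ← ENNReal.ofReal_mul (by positivity), ← ENNReal.ofReal_mul (by positivity)]
    refine ENNReal.ofReal_le_ofReal ?_
    calc ‖y‖ ^ (2 * k) * Real.exp (-U (x₀ + y))
        ≤ (k / c) ^ k * Real.exp (c * ‖y‖ ^ 2 - k) * Real.exp (-U (x₀ + y)) := by
          gcongr; exact pow_two_mul_le_mul_exp_sq hk hc _
      _ = (k / c) ^ k * Real.exp (-k) * Real.exp (c * ‖y‖ ^ 2 - U (x₀ + y)) := by
          rw [mul_assoc, mul_assoc ((k / c) ^ k), ← Real.exp_add, ← Real.exp_add]; ring_nf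
  calc ∫⁻ x, ‖x - x₀‖ₑ ^ (2 * k) * ENNReal.ofReal (Real.exp (-U x)) ∂μ
      = ∫⁻ y, ‖y‖ₑ ^ (2 * k) * ENNReal.ofReal (Real.exp (-U (x₀ + y))) ∂μ := by
        rw [← lintegral_add_left_eq_self _ x₀]; simp only [add_sub_cancel_left]
    _ ≤ ∫⁻ y, ENNReal.ofReal ((k / c) ^ k * Real.exp (-k))
          * ENNReal.ofReal (Real.exp (c * ‖y‖ ^ 2 - U (x₀ + y))) ∂μ := lintegral_mono hpoint
    _ = ENNReal.ofReal ((k / c) ^ k * Real.exp (-k))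
          * ∫⁻ y, ENNReal.ofReal (Real.exp (c * ‖y‖ ^ 2 - U (x₀ + y))) ∂μ :=
        lintegral_const_mul' _ _ ENNReal.ofReal_ne_top
    _ ≤ ENNReal.ofReal ((k / c) ^ k * Real.exp (-k))
          * (ENNReal.ofReal (s ^ finrank ℝ E)⁻¹ * ∫⁻ x, ENNReal.ofReal (Real.exp (-U x)) ∂μ) := by
        gcongr; exact lintegral_exp_sq_sub_le μ hU hmin hs0 hs1.le
    _ = _ := by rw [← mul_assoc, ← ENNReal.ofReal_mul (by positivity)]

theorem lintegral_enorm_sub_pow_mul_exp_neg_le_of_strongConvexOn (hm : 0 < m)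
    (hU : StrongConvexOn Set.univ m U) (hmin : ∀ x, U x₀ ≤ U x) {k : ℕ} (hk : 0 < k) :
    ∫⁻ x, ‖x - x₀‖ₑ ^ (2 * k) * ENNReal.ofReal (Real.exp (-U x)) ∂μ
      ≤ ENNReal.ofReal ((2 * (finrank ℝ E + 2 * k) / m) ^ k)
        * ∫⁻ x, ENNReal.ofReal (Real.exp (-U x)) ∂μ := by
  set d := finrank ℝ E
  have hs0 : (0 : ℝ) < (d + k) / (d + 2 * k) := by positivity
  have hs1 : ((d : ℝ) + k) / (d + 2 * k) < 1 := by
    rw [div_lt_one (by positivity)]; exact_mod_cast (by omega : d + k < d + 2 * k)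
  refine (lintegral_enorm_sub_pow_mul_exp_neg_le_of_mem_Ioo μ hm hU hmin hk hs0 hs1).trans ?_
  gcongr
  exact mode_moment_constant_le d k hk hm rfl

theorem lintegral_enorm_sub_pow_le_of_density (hm : 0 < m) (hU : StrongConvexOn Set.univ m U)
    (hmin : ∀ x, U x₀ ≤ U x) (ν : Measure E) [IsProbabilityMeasure ν]
    (hν : ∀ t, MeasurableSet t → ν t = (∫⁻ x in t, ENNReal.ofReal (Real.exp (-U x)) ∂μ)
      / ∫⁻ x, ENNReal.ofReal (Real.exp (-U x)) ∂μ) {k : ℕ} (hk : 0 < k) :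
    ∫⁻ x, ‖x - x₀‖ₑ ^ (2 * k) ∂ν ≤ ENNReal.ofReal ((2 * (finrank ℝ E + 2 * k) / m) ^ k) := by
  set g : E → ℝ≥0∞ := fun x => ENNReal.ofReal (Real.exp (-U x))
  set Z := ∫⁻ x, g x ∂μ
  have hg : Measurable g :=
    ENNReal.measurable_ofReal.comp (Real.continuous_exp.comp (hU.continuous hm.le).neg).measurable
  have hZ : Z / Z = 1 := by simpa using (hν Set.univ MeasurableSet.univ).symm
  have hZ0 : Z ≠ 0 := fun h => by simp [h] at hZ
  have hZtop : Z ≠ ∞ := fun h => by simp [h] at hZ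
  have hν_eq : ν = Z⁻¹ • μ.withDensity g := by
    ext t ht
    rw [hν t ht, Measure.smul_apply, withDensity_apply _ ht, smul_eq_mul, ENNReal.div_eq_inv_mul]
  rw [hν_eq, lintegral_smul_measure, lintegral_withDensity_eq_lintegral_mul _ hg (by fun_prop),
    smul_eq_mul, ENNReal.inv_mul_le_iff hZ0 hZtop, mul_comm Z]
  simpa only [Pi.mul_apply, mul_comm (g _)] using
    lintegral_enorm_sub_pow_mul_exp_neg_le_of_strongConvexOn μ hm hU hmin hk

end AddHaar

theorem lintegral_enorm_sub_rpow_le_of_coupling {E : Type*} [NormedAddCommGroup E]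
    [MeasurableSpace E] [OpensMeasurableSpace E] {μ ν : Measure E} {γ : Measure (E × E)}
    (hγ₁ : γ.map Prod.fst = μ) (hγ₂ : γ.map Prod.snd = ν) (x₀ : E) {p : ℝ} (hp : 1 ≤ p) :
    ∫⁻ x, ‖x - x₀‖ₑ ^ p ∂μ
      ≤ 2 ^ (p - 1) * (∫⁻ z, ‖z.1 - z.2‖ₑ ^ p ∂γ + ∫⁻ x, ‖x - x₀‖ₑ ^ p ∂ν) := by
  have hmeas : Measurable fun x : E => ‖x - x₀‖ₑ ^ p :=
    (continuous_id.sub continuous_const).enorm.measurable.pow_const p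
  have hmeas₂ : Measurable fun z : E × E => ‖z.2 - x₀‖ₑ ^ p := hmeas.comp measurable_snd
  subst hγ₁ hγ₂
  rw [lintegral_map hmeas measurable_fst, lintegral_map hmeas measurable_snd,
    ← lintegral_add_right _ hmeas₂,
    ← lintegral_const_mul' _ _ (by simp)]
  refine lintegral_mono fun z => ?_
  calc ‖z.1 - x₀‖ₑ ^ p ≤ (‖z.1 - z.2‖ₑ + ‖z.2 - x₀‖ₑ) ^ p := by
        gcongr
        rw [← sub_add_sub_cancel z.1 z.2 x₀]
        exact enorm_add_le _ _
    _ ≤ 2 ^ (p - 1) * (‖z.1 - z.2‖ₑ ^ p + ‖z.2 - x₀‖ₑ ^ p) :=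
        ENNReal.rpow_add_le_mul_rpow_add_rpow _ _ hp

theorem lintegral_enorm_sub_rpow_le_Wpp {d : ℕ} (μ ν : Measure (EuclideanSpace ℝ (Fin d)))
    (x₀ : EuclideanSpace ℝ (Fin d)) {p : ℝ} (hp : 1 ≤ p) :
    ∫⁻ x, ‖x - x₀‖ₑ ^ p ∂μ ≤ 2 ^ (p - 1) * Wpp d p μ ν + 2 ^ (p - 1) * ∫⁻ x, ‖x - x₀‖ₑ ^ p ∂ν := by
  have h0 : (2 : ℝ≥0∞) ^ (p - 1) ≠ 0 := by simp
  have htop : (2 : ℝ≥0∞) ^ (p - 1) ≠ ∞ := by simp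
  simp only [Wpp, ENNReal.mul_iInf_of_ne h0 htop, ENNReal.iInf_add, ← mul_add]
  exact le_iInf fun γ => le_iInf fun hγ₁ => le_iInf fun hγ₂ =>
    lintegral_enorm_sub_rpow_le_of_coupling hγ₁ hγ₂ x₀ hp

theorem moment_to_mode_via_wasserstein_general
    (d : ℕ) (hd : 0 < d) (mhat : ℝ) (hm : 0 < mhat)
    (U : EuclideanSpace ℝ (Fin d) → ℝ)
    (hU : StrongConvexOn Set.univ mhat U)
    (θU : EuclideanSpace ℝ (Fin d)) (hmode : ∀ θ, U θU ≤ U θ)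
    (μstar : Measure (EuclideanSpace ℝ (Fin d))) [IsProbabilityMeasure μstar]
    (hμ : ∀ s : Set (EuclideanSpace ℝ (Fin d)), MeasurableSet s →
      μstar s = (∫⁻ θ in s, ENNReal.ofReal (Real.exp (-U θ)))
        / ∫⁻ θ, ENNReal.ofReal (Real.exp (-U θ)))
    (μ : Measure (EuclideanSpace ℝ (Fin d)))
    (p : ℕ) (hp : 0 < p) (hpe : Even p) :
    (∫⁻ θ, (‖θ - θU‖₊ : ℝ≥0∞) ^ (p : ℝ) ∂μ)
      ≤ ENNReal.ofReal ((2 : ℝ) ^ (p - 1)) * Wpp d p μ μstar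
        + ENNReal.ofReal ((10 ^ p / 2) * ((d * p : ℝ) / mhat) ^ ((p : ℝ) / 2)) := by
  obtain ⟨k, rfl⟩ := hpe.two_dvd
  have hk : 0 < k := by omega
  have hmoment := lintegral_enorm_sub_pow_le_of_density volume hm hU hmode μstar hμ hk
  rw [finrank_euclideanSpace_fin] at hmoment
  have hcoef : ENNReal.ofReal ((2 : ℝ) ^ (2 * k - 1)) = 2 ^ (((2 * k : ℕ) : ℝ) - 1) := by
    rw [ENNReal.ofReal_pow zero_le_two, ENNReal.ofReal_ofNat, ← ENNReal.rpow_natCast,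
      Nat.cast_sub (by omega)]
    norm_num
  have hexp : ((d * (2 * k : ℕ) : ℝ) / mhat) ^ (((2 * k : ℕ) : ℝ) / 2)
      = (d * (2 * k) / mhat) ^ k := by
    rw [← Real.rpow_natCast]; push_cast; ring_nf
  have htail : 2 ^ (((2 * k : ℕ) : ℝ) - 1) * ∫⁻ θ, ‖θ - θU‖ₑ ^ ((2 * k : ℕ) : ℝ) ∂μstar
      ≤ ENNReal.ofReal (10 ^ (2 * k) / 2 * (d * (2 * k) / mhat) ^ k) := by
    simp only [← hcoef, ENNReal.rpow_natCast]
    calc _ ≤ ENNReal.ofReal ((2 : ℝ) ^ (2 * k - 1))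
            * ENNReal.ofReal ((2 * (d + 2 * k) / mhat) ^ k) := mul_le_mul_right hmoment _
      _ ≤ _ := by
          rw [← ENNReal.ofReal_mul (by positivity)]
          exact ENNReal.ofReal_le_ofReal (two_pow_mul_moment_bound_le hd hk hm)
  rw [hcoef, hexp]
  exact (lintegral_enorm_sub_rpow_le_Wpp μ μstar θU (Nat.one_le_cast.2 hp)).trans
    (add_le_add le_rfl htail)

/-- For any probability measure `μ` on `ℝ^d`, an `m̂`-strongly
log-concave probability measure `μ* ∝ e^{−U}` with mode `θ_U*`, and a positive even
integer `p`:
`E_{θ∼μ} ‖θ − θ_U*‖^p ≤ 2^{p−1} W_p^p(μ, μ*) + (10^p/2) (dp/m̂)^{p/2}`. -/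
theorem moment_to_mode_via_wasserstein
    (d : ℕ) (hd : 0 < d) (mhat : ℝ) (hm : 0 < mhat)
    (U : EuclideanSpace ℝ (Fin d) → ℝ)
    (hU : StrongConvexOn Set.univ mhat U)
    (θU : EuclideanSpace ℝ (Fin d)) (hmode : ∀ θ, U θU ≤ U θ)
    (μstar : Measure (EuclideanSpace ℝ (Fin d))) [IsProbabilityMeasure μstar]
    (hμ : ∀ s : Set (EuclideanSpace ℝ (Fin d)), MeasurableSet s →
      μstar s = (∫⁻ θ in s, ENNReal.ofReal (Real.exp (-U θ)))
        / ∫⁻ θ, ENNReal.ofReal (Real.exp (-U θ)))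
    (μ : Measure (EuclideanSpace ℝ (Fin d))) [IsProbabilityMeasure μ]
    (p : ℕ) (hp : 0 < p) (hpe : Even p) :
    (∫⁻ θ, (‖θ - θU‖₊ : ℝ≥0∞) ^ (p : ℝ) ∂μ)
      ≤ ENNReal.ofReal ((2 : ℝ) ^ (p - 1)) * Wpp d p μ μstar
        + ENNReal.ofReal ((10 ^ p / 2) * ((d * p : ℝ) / mhat) ^ ((p : ℝ) / 2)) :=
  moment_to_mode_via_wasserstein_general d hd mhat hm U hU θU hmode μstar hμ μ p hp hpe
end

section
/- Let Y be a random vector in ℝ^d whose even moments satisfy E[‖Y‖^{2i}] ≤ 3·((2D + 4σi)/M)^i for all integers i ≥ 1, for some constants D, σ, M > 0. Then for every λ with 0 ≤ λ ≤ M/(32σ): E[e^{λ‖Y‖²}] ≤ (3/2)·(e^{4λD/M} + 2.5). -/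
/-!
Expanding `exp (λ‖Y‖²)` in its power series and integrating termwise, the `n`-th term is
`λⁿ E‖Y‖²ⁿ / n! ≤ 3 (a + b n)ⁿ / n!` with `a = 2λD/M`, `b = 4λσ/M`. Convexity of `t ↦ tⁿ` splits
this into `(3/2) ((2a)ⁿ / n! + (2bn)ⁿ / n!)`, and `nⁿ ≤ eⁿ n!` bounds the second part by
`(2eb)ⁿ ≤ (7/10)ⁿ` as soon as `λ ≤ M/(32σ)`. Summing over `n ≥ 1` and adding `1` for `n = 0`
gives `(3/2) e^{2a} + 3`.
-/

open MeasureTheory Real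
open scoped Nat

lemma add_mul_pow_div_factorial_le {a b : ℝ} (ha : 0 ≤ a) (hb : 0 ≤ b) {n : ℕ} (hn : n ≠ 0) :
    (a + b * n) ^ n / n ! ≤ ((2 * a) ^ n / n ! + (2 * exp 1 * b) ^ n) / 2 := by
  have hpow : (n : ℝ) ^ n / n ! ≤ exp 1 ^ n := by
    rw [exp_one_pow]; exact pow_div_factorial_le_exp _ n.cast_nonneg n
  obtain ⟨k, rfl⟩ := Nat.exists_eq_succ_of_ne_zero hn
  calc (a + b * ↑(k + 1)) ^ (k + 1) / ↑(k + 1)!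
      ≤ 2 ^ k * (a ^ (k + 1) + (b * ↑(k + 1)) ^ (k + 1)) / ↑(k + 1)! := by
        gcongr; exact add_pow_le ha (by positivity) (k + 1)
    _ = ((2 * a) ^ (k + 1) / ↑(k + 1)!
          + (2 * b) ^ (k + 1) * ((↑(k + 1) : ℝ) ^ (k + 1) / ↑(k + 1)!)) / 2 := by
        simp only [mul_pow]; field_simp; ring
    _ ≤ ((2 * a) ^ (k + 1) / ↑(k + 1)! + (2 * b) ^ (k + 1) * exp 1 ^ (k + 1)) / 2 := by gcongr
    _ = ((2 * a) ^ (k + 1) / ↑(k + 1)! + (2 * exp 1 * b) ^ (k + 1)) / 2 := by ring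

lemma hasSum_pow_succ_div_factorial (x : ℝ) :
    HasSum (fun n => x ^ (n + 1) / (n + 1)!) (exp x - 1) := by
  have := (hasSum_nat_add_iff' 1).mpr (exp_eq_exp_ℝ ▸ NormedSpace.expSeries_div_hasSum_exp x)
  simpa using this

lemma hasSum_pow_succ_of_lt_one {r : ℝ} (h₀ : 0 ≤ r) (h₁ : r < 1) :
    HasSum (fun n => r ^ (n + 1)) (r / (1 - r)) := by
  simpa only [← pow_succ', div_eq_mul_inv] using (hasSum_geometric_of_lt_one h₀ h₁).mul_left r

section

variable {Ω : Type*} [MeasurableSpace Ω] {μ : Measure Ω}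

lemma aestronglyMeasurable_of_integrable_exp {X : Ω → ℝ}
    (h : Integrable (fun ω => exp (X ω)) μ) : AEStronglyMeasurable X μ :=
  (h.aestronglyMeasurable.aemeasurable.log.congr
    (ae_of_all _ fun ω => log_exp (X ω))).aestronglyMeasurable

lemma integrable_pow_div_factorial_of_integrable_exp {X : Ω → ℝ} (hX : ∀ ω, 0 ≤ X ω)
    (h : Integrable (fun ω => exp (X ω)) μ) (n : ℕ) :
    Integrable (fun ω => X ω ^ n / n !) μ := by
  have hXm := aestronglyMeasurable_of_integrable_exp h
  exact h.mono' (by fun_prop) (ae_of_all _ fun ω => by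
      rw [norm_of_nonneg (by have := hX ω; positivity)]
      exact pow_div_factorial_le_exp _ (hX ω) n)

lemma integral_exp_le_one_add_tsum [IsProbabilityMeasure μ] {X : Ω → ℝ} (hX : ∀ ω, 0 ≤ X ω)
    (h : Integrable (fun ω => exp (X ω)) μ) {c : ℕ → ℝ} (hc : Summable c)
    (hmom : ∀ n, ∫ ω, X ω ^ (n + 1) / (n + 1)! ∂μ ≤ c n) :
    ∫ ω, exp (X ω) ∂μ ≤ 1 + ∑' n, c n := by
  have hterm_nonneg : ∀ n, 0 ≤ ∫ ω, X ω ^ n / n ! ∂μ := fun n =>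
    integral_nonneg fun ω => by have := hX ω; positivity
  have hsum : Summable fun n => ∫ ω, X ω ^ n / n ! ∂μ :=
    (summable_nat_add_iff 1).mp (hc.of_nonneg_of_le (fun n => hterm_nonneg _) hmom)
  have hexp : ∫ ω, exp (X ω) ∂μ = ∑' n, ∫ ω, X ω ^ n / n ! ∂μ := by
    rw [integral_tsum_of_summable_integral_norm
      (integrable_pow_div_factorial_of_integrable_exp hX h) ?_]
    · simp_rw [exp_eq_exp_ℝ, NormedSpace.exp_eq_tsum_div]
    · refine hsum.congr fun n => integral_congr_ae (ae_of_all _ fun ω => ?_)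
      have := hX ω
      exact (norm_of_nonneg (by positivity)).symm
  rw [hexp, hsum.tsum_eq_zero_add]
  simp only [pow_zero, Nat.factorial_zero, Nat.cast_one, div_one, integral_const, probReal_univ,
    smul_eq_mul, mul_one]
  gcongr 1 + ?_
  exact ((summable_nat_add_iff 1).mpr hsum).tsum_le_tsum hmom hc

lemma integral_exp_le_of_moment_le [IsProbabilityMeasure μ] {X : Ω → ℝ} (hX : ∀ ω, 0 ≤ X ω)
    {a b : ℝ} (ha : 0 ≤ a) (hb : 0 ≤ b) (hab : 2 * exp 1 * b ≤ 7 / 10)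
    (hint : Integrable (fun ω => exp (X ω)) μ)
    (hmom : ∀ n : ℕ, n ≠ 0 → ∫ ω, X ω ^ n ∂μ ≤ 3 * (a + b * n) ^ n) :
    ∫ ω, exp (X ω) ∂μ ≤ 3 / 2 * (exp (2 * a) + 2.5) := by
  set r : ℝ := 7 / 10
  have hsum : HasSum (fun n => 3 / 2 * ((2 * a) ^ (n + 1) / (n + 1)! + r ^ (n + 1)))
      (3 / 2 * (exp (2 * a) - 1 + r / (1 - r))) :=
    ((hasSum_pow_succ_div_factorial _).add
      (hasSum_pow_succ_of_lt_one (by norm_num) (by norm_num))).mul_left _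
  have hterm (n : ℕ) : ∫ ω, X ω ^ (n + 1) / (n + 1)! ∂μ
      ≤ 3 / 2 * ((2 * a) ^ (n + 1) / (n + 1)! + r ^ (n + 1)) := by
    rw [integral_div]
    calc _ ≤ 3 * ((a + b * ↑(n + 1)) ^ (n + 1) / (n + 1)!) := by
          rw [← mul_div_assoc]; gcongr; exact hmom _ n.succ_ne_zero
      _ ≤ 3 * (((2 * a) ^ (n + 1) / (n + 1)! + (2 * exp 1 * b) ^ (n + 1)) / 2) := by
          gcongr 3 * ?_; exact add_mul_pow_div_factorial_le ha hb n.succ_ne_zero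
      _ ≤ _ := by
          have : (2 * exp 1 * b) ^ (n + 1) ≤ r ^ (n + 1) := by gcongr
          linarith
  calc ∫ ω, exp (X ω) ∂μ ≤ 1 + 3 / 2 * (exp (2 * a) - 1 + r / (1 - r)) :=
        hsum.tsum_eq ▸ integral_exp_le_one_add_tsum hX hint hsum.summable hterm
    _ ≤ 3 / 2 * (exp (2 * a) + 2.5) := by norm_num [r]; linarith

end

theorem mgf_from_even_moments_general
    (d : ℕ)
    (Ω : Type*) [MeasurableSpace Ω] (P : Measure Ω) [IsProbabilityMeasure P]
    (Y : Ω → EuclideanSpace ℝ (Fin d))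
    (D σ M : ℝ) (hD : 0 < D) (hσ : 0 < σ) (hM : 0 < M)
    (hmom : ∀ i : ℕ, 1 ≤ i →
      (∫ ω, ‖Y ω‖ ^ (2 * i) ∂P) ≤ 3 * ((2 * D + 4 * σ * i) / M) ^ i) :
    ∀ lam : ℝ, 0 ≤ lam → lam ≤ M / (32 * σ) →
      (∫ ω, Real.exp (lam * ‖Y ω‖ ^ 2) ∂P)
        ≤ (3 / 2) * (Real.exp (4 * lam * D / M) + 2.5) := by
  intro lam hlam0 hlam
  by_cases hint : Integrable (fun ω => exp (lam * ‖Y ω‖ ^ 2)) P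
  swap
  · rw [integral_undef hint]; positivity
  have hlamσ : lam * (32 * σ) ≤ M := (le_div_iff₀ (by positivity)).mp hlam
  have hmom' (n : ℕ) (hn : n ≠ 0) : ∫ ω, (lam * ‖Y ω‖ ^ 2) ^ n ∂P
      ≤ 3 * (2 * lam * D / M + 4 * lam * σ / M * n) ^ n := by
    calc ∫ ω, (lam * ‖Y ω‖ ^ 2) ^ n ∂P = lam ^ n * ∫ ω, ‖Y ω‖ ^ (2 * n) ∂P := by
          simp_rw [mul_pow, ← pow_mul]; exact integral_const_mul _ _
      _ ≤ lam ^ n * (3 * ((2 * D + 4 * σ * n) / M) ^ n) := by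
          gcongr; exact hmom n (Nat.one_le_iff_ne_zero.mpr hn)
      _ = 3 * (2 * lam * D / M + 4 * lam * σ / M * n) ^ n := by
          rw [mul_left_comm, ← mul_pow]; congr 2; field_simp
  have hb : 2 * exp 1 * (4 * lam * σ / M) ≤ 7 / 10 := by
    have he := exp_one_lt_d9
    rw [mul_div_assoc', div_le_iff₀ hM]
    nlinarith [mul_nonneg (mul_nonneg hlam0 hσ.le) (sub_nonneg.2 he.le)]
  convert integral_exp_le_of_moment_le (fun ω => by positivity) (by positivity) (by positivity)
    hb hint hmom' using 4
  ring

/-- Sub-exponential MGF bound from polynomial even-moment growth: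
if a random vector `Y` in `ℝ^d` satisfies `E ‖Y‖^{2i} ≤ 3 ((2D + 4σi)/M)^i` for all
integers `i ≥ 1`, then for every `0 ≤ λ ≤ M/(32σ)`,
`E e^{λ‖Y‖²} ≤ (3/2) (e^{4λD/M} + 2.5)`. -/
theorem mgf_from_even_moments
    (d : ℕ) (hd : 0 < d)
    (Ω : Type*) [MeasurableSpace Ω] (P : Measure Ω) [IsProbabilityMeasure P]
    (Y : Ω → EuclideanSpace ℝ (Fin d)) (hY : Measurable Y)
    (D σ M : ℝ) (hD : 0 < D) (hσ : 0 < σ) (hM : 0 < M)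
    (hmom : ∀ i : ℕ, 1 ≤ i →
      (∫ ω, ‖Y ω‖ ^ (2 * i) ∂P) ≤ 3 * ((2 * D + 4 * σ * i) / M) ^ i) :
    ∀ lam : ℝ, 0 ≤ lam → lam ≤ M / (32 * σ) →
      (∫ ω, Real.exp (lam * ‖Y ω‖ ^ 2) ∂P)
        ≤ (3 / 2) * (Real.exp (4 * lam * D / M) + 2.5) :=
  mgf_from_even_moments_general d Ω P Y D σ M hD hσ hM hmom
end
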